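/- arXiv:1509.05057 — 3 statements merged into one kernel-verified Lean document; each statement's English description precedes it below -/
import Mathlib

section
/- In any finite simple graph G, every critical independent set is contained in some maximum independent set of G. -/
open Set

variable {V : Type*} [Fintype V]

/-- `S` is an independent set in `G`: no two of its vertices are adjacent. -/
def IsIndep (G : SimpleGraph V) (S : Set V) : Prop :=
  ∀ u ∈ S, ∀ v ∈ S, ¬ G.Adj u v

/-- The neighborhood `N(X)` of a set of vertices. -/
def nbhd (G : SimpleGraph V) (X : Set V) : Set V := {v | ∃ u ∈ X, G.Adj u v}

/-- The difference `d(X) = |X| - |N(X)|` computed in the induced subgraph `G[W]`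
(neighborhoods are intersected with `W`). -/
noncomputable def dOn (G : SimpleGraph V) (W X : Set V) : ℤ :=
  (X.ncard : ℤ) - ((nbhd G X ∩ W).ncard : ℤ)

/-- The difference `d(X) = |X| - |N(X)|` in `G`. -/
noncomputable def dG (G : SimpleGraph V) (X : Set V) : ℤ := dOn G Set.univ X

/-- `S` is a critical independent set of the induced subgraph `G[W]`:
it is an independent subset of `W` whose difference attains
`max {d(Y) : Y ⊆ W}` (the critical difference of `G[W]`). -/
def IsCritIndepOn (G : SimpleGraph V) (W S : Set V) : Prop :=
  S ⊆ W ∧ IsIndep G S ∧ ∀ Y ⊆ W, dOn G W Y ≤ dOn G W S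

/-- `S` is a critical independent set of `G`. -/
def IsCritIndep (G : SimpleGraph V) (S : Set V) : Prop := IsCritIndepOn G Set.univ S

/-- A maximum critical independent set of `G[W]`: a critical independent set of
largest cardinality. -/
def IsMaxCritIndepOn (G : SimpleGraph V) (W S : Set V) : Prop :=
  IsCritIndepOn G W S ∧ ∀ T, IsCritIndepOn G W T → T.ncard ≤ S.ncard

/-- A maximum critical independent set of `G`. -/
def IsMaxCritIndep (G : SimpleGraph V) (S : Set V) : Prop := IsMaxCritIndepOn G Set.univ S

/-- A maximum independent set of the induced subgraph `G[W]`. -/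
def IsMaxIndepOn (G : SimpleGraph V) (W S : Set V) : Prop :=
  S ⊆ W ∧ IsIndep G S ∧ ∀ T ⊆ W, IsIndep G T → T.ncard ≤ S.ncard

/-- A maximum independent set of `G`. -/
def IsMaxIndep (G : SimpleGraph V) (S : Set V) : Prop := IsMaxIndepOn G Set.univ S

/-- The independence number of the induced subgraph `G[W]`. -/
noncomputable def alphaOn (G : SimpleGraph V) (W : Set V) : ℕ :=
  sSup {n | ∃ S ⊆ W, IsIndep G S ∧ S.ncard = n}

/-- The independence number `α(G)`. -/
noncomputable def alpha (G : SimpleGraph V) : ℕ := alphaOn G Set.univ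

/-- The maximum matching number `μ(G)`. -/
noncomputable def mu (G : SimpleGraph V) : ℕ :=
  sSup {n | ∃ M : G.Subgraph, M.IsMatching ∧ M.edgeSet.ncard = n}

/-- `G` is a König-Egerváry graph: `α(G) + μ(G) = |V(G)|`. -/
def IsKE (G : SimpleGraph V) : Prop := alpha G + mu G = Fintype.card V

/-- `nucleus(G[W])`: intersection of all maximum critical independent sets of `G[W]`. -/
def nucleusOn (G : SimpleGraph V) (W : Set V) : Set V := ⋂₀ {S | IsMaxCritIndepOn G W S}

/-- `nucleus(G)`. -/
def nucleus (G : SimpleGraph V) : Set V := nucleusOn G Set.univ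

/-- `diadem(G[W])`: union of all maximum critical independent sets of `G[W]`. -/
def diademOn (G : SimpleGraph V) (W : Set V) : Set V := ⋃₀ {S | IsMaxCritIndepOn G W S}

/-- `diadem(G)`. -/
def diadem (G : SimpleGraph V) : Set V := diademOn G Set.univ

/-- `ker(G)`: intersection of all critical independent sets of `G`. -/
def kerG (G : SimpleGraph V) : Set V := ⋂₀ {S | IsCritIndep G S}

/-- `core(G)`: intersection of all maximum independent sets of `G`. -/
def core (G : SimpleGraph V) : Set V := ⋂₀ {S | IsMaxIndep G S}

/-- `corona(G)`: union of all maximum independent sets of `G`. -/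
def corona (G : SimpleGraph V) : Set V := ⋃₀ {S | IsMaxIndep G S}

/-!
Let `S` be a critical independent set and `I` a maximum independent set. Exchanging `I ∩ N(S)`
for `S \ I` gives the independent set `S ∪ (I \ N(S))`, which contains `S`. It is no smaller
than `I`: the vertices of `I ∩ N(S)` are not adjacent to `S ∩ I`, so
`|I ∩ N(S)| ≤ |N(S)| - |N(S ∩ I)| ≤ |S| - |S ∩ I|`, the last step being
`d(S ∩ I) ≤ d(S)`.
-/

section

variable {α : Type*} {G : SimpleGraph α}

lemma nbhd_mono {X Y : Set α} (h : X ⊆ Y) : nbhd G X ⊆ nbhd G Y :=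
  fun _ ⟨u, hu, hadj⟩ => ⟨u, h hu, hadj⟩

lemma exists_isMaxIndep [Finite α] (G : SimpleGraph α) : ∃ I, IsMaxIndep G I := by
  obtain ⟨I, hI, hmax⟩ := Set.exists_max_image {T | IsIndep G T} Set.ncard (toFinite _)
    ⟨∅, fun _ hu => absurd hu (notMem_empty _)⟩
  exact ⟨I, subset_univ I, hI, fun T _ hT => hmax T hT⟩

lemma IsIndep.union_sdiff_nbhd {S I : Set α} (hS : IsIndep G S) (hI : IsIndep G I) :
    IsIndep G (S ∪ (I \ nbhd G S)) := by
  rintro u (huS | ⟨huI, huN⟩) v (hvS | ⟨hvI, hvN⟩) hadj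
  · exact hS u huS v hvS hadj
  · exact hvN ⟨u, huS, hadj⟩
  · exact huN ⟨v, hvS, hadj.symm⟩
  · exact hI u huI v hvI hadj

lemma IsIndep.inter_nbhd_subset {S I : Set α} (hI : IsIndep G I) :
    I ∩ nbhd G S ⊆ nbhd G S \ nbhd G (S ∩ I) :=
  fun v ⟨hvI, hvN⟩ => ⟨hvN, fun ⟨u, ⟨_, huI⟩, hadj⟩ => hI u huI v hvI hadj⟩

lemma IsCritIndep.ncard_inter_nbhd_le [Finite α] {S I : Set α} (hS : IsCritIndep G S)
    (hI : IsIndep G I) : (I ∩ nbhd G S).ncard ≤ (S \ I).ncard := by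
  have hcrit :
      ((S ∩ I).ncard : ℤ) - (nbhd G (S ∩ I)).ncard ≤ S.ncard - (nbhd G S).ncard := by
    simpa only [dOn, inter_univ] using hS.2.2 (S ∩ I) (subset_univ _)
  have hnbhd : ((nbhd G S \ nbhd G (S ∩ I)).ncard : ℤ) =
      (nbhd G S).ncard - (nbhd G (S ∩ I)).ncard :=
    cast_ncard_sdiff (nbhd_mono inter_subset_left) (toFinite _)
  have hS_split := ncard_inter_add_ncard_sdiff_eq_ncard S I
  have hle := ncard_le_ncard (hI.inter_nbhd_subset (S := S))
  omega

lemma IsCritIndep.ncard_le_ncard_union_sdiff_nbhd [Finite α] {S I : Set α}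
    (hS : IsCritIndep G S) (hI : IsIndep G I) : I.ncard ≤ (S ∪ (I \ nbhd G S)).ncard :=
  calc I.ncard = (I ∩ nbhd G S).ncard + (I \ nbhd G S).ncard :=
        (ncard_inter_add_ncard_sdiff_eq_ncard I _).symm
    _ ≤ (S \ I).ncard + (I \ nbhd G S).ncard :=
        Nat.add_le_add_right (hS.ncard_inter_nbhd_le hI) _
    _ = ((S \ I) ∪ (I \ nbhd G S)).ncard :=
        (ncard_union_eq (disjoint_sdiff_left.mono_right sdiff_subset)).symm
    _ ≤ (S ∪ (I \ nbhd G S)).ncard := ncard_le_ncard (union_subset_union_left _ sdiff_subset)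

end

/-- Every critical independent set is contained in some maximum independent set. -/
theorem stmt1 (G : SimpleGraph V) (S : Set V) (hS : IsCritIndep G S) :
    ∃ T : Set V, IsMaxIndep G T ∧ S ⊆ T := by
  obtain ⟨I, -, hI, hImax⟩ := exists_isMaxIndep G
  refine ⟨S ∪ (I \ nbhd G S), ⟨subset_univ _, hS.2.1.union_sdiff_nbhd hI, fun T _ hT => ?_⟩,
    subset_union_left⟩
  exact (hImax T (subset_univ T) hT).trans (hS.ncard_le_ncard_union_sdiff_nbhd hI)
end

section
/- In any finite simple graph G, each critical independent set is contained in some maximum critical independent set (a critical independent set of maximum cardinality). -/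
open Set

variable {V : Type*} [Fintype V]

/-!
Let `S` be critical independent and `M` a maximum critical independent set, and put
`C = M \ N(S)`, `D = M ∩ N(S)`. Criticality of `S` gives Hall's condition
`|D| ≤ |S ∩ N(D)|`; as `S ∩ N(D)` avoids `N(C)`, removing `D` from `M` does not
decrease `d`, so `C` is critical. Since `d` is supermodular, the union `S ∪ C` of two
critical sets is critical; it is independent, and Hall's condition again gives
`|M| = |C| + |D| ≤ |C| + |S \ M| ≤ |S ∪ C|`.
-/

section

variable (G : SimpleGraph V)

def IsCritical (X : Set V) : Prop := ∀ Y, dG G Y ≤ dG G X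

omit [Fintype V] in
theorem nbhd_union (A B : Set V) : nbhd G (A ∪ B) = nbhd G A ∪ nbhd G B := by
  ext v
  simp only [nbhd, mem_ofPred_eq, mem_union, or_and_right, exists_or]

omit [Fintype V] in
theorem nbhd_mono_s4 {A B : Set V} (h : A ⊆ B) : nbhd G A ⊆ nbhd G B :=
  fun _ ⟨u, hu, huv⟩ => ⟨u, h hu, huv⟩

omit [Fintype V] in
theorem disjoint_nbhd_comm {A B : Set V} : Disjoint A (nbhd G B) ↔ Disjoint B (nbhd G A) := by
  simp only [Set.disjoint_left, nbhd, mem_ofPred_eq, not_exists, not_and]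
  exact ⟨fun h b hb a ha hab => h ha b hb hab.symm, fun h a ha b hb hba => h hb a ha hba.symm⟩

omit [Fintype V] in
theorem dG_eq (X : Set V) : dG G X = X.ncard - (nbhd G X).ncard := by
  simp [dG, dOn]

theorem dG_add_dG_le (A B : Set V) :
    dG G A + dG G B ≤ dG G (A ∪ B) + dG G (A ∩ B) := by
  have hX := ncard_union_add_ncard_inter A B
  have hN := ncard_union_add_ncard_inter (nbhd G A) (nbhd G B)
  have hNinter : (nbhd G (A ∩ B)).ncard ≤ (nbhd G A ∩ nbhd G B).ncard :=
    ncard_le_ncard (subset_inter (nbhd_mono_s4 G inter_subset_left)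
      (nbhd_mono_s4 G inter_subset_right))
  simp only [dG_eq, nbhd_union]
  omega

variable {G}

omit [Fintype V] in
theorem isCritIndep_iff {S : Set V} : IsCritIndep G S ↔ IsIndep G S ∧ IsCritical G S := by
  simp [IsCritIndep, IsCritIndepOn, IsCritical, dG]

theorem IsCritical.union {A B : Set V} (hA : IsCritical G A) (hB : IsCritical G B) :
    IsCritical G (A ∪ B) := fun Y => by
  linarith [hA Y, hA (A ∩ B), hB A, dG_add_dG_le G A B]

/-- Hall's condition for matching `N(S)` into a critical set `S`. -/
theorem IsCritical.ncard_le_ncard_inter_nbhd {S D : Set V} (hS : IsCritical G S)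
    (hD : D ⊆ nbhd G S) : D.ncard ≤ (S ∩ nbhd G D).ncard := by
  have hdisj : Disjoint (nbhd G (S \ nbhd G D)) D :=
    (disjoint_nbhd_comm G).1 disjoint_sdiff_left |>.symm
  have hsub : nbhd G (S \ nbhd G D) ∪ D ⊆ nbhd G S :=
    union_subset (nbhd_mono_s4 G sdiff_subset) hD
  have hN := ncard_le_ncard hsub
  rw [ncard_union_eq hdisj] at hN
  have hsplit := ncard_inter_add_ncard_sdiff_eq_ncard S (nbhd G D)
  have hcrit := hS (S \ nbhd G D)
  simp only [dG_eq] at hcrit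
  omega

theorem IsCritical.dG_le_dG_diff_nbhd {S : Set V} (hS : IsCritical G S) (M : Set V) :
    dG G M ≤ dG G (M \ nbhd G S) := by
  set C := M \ nbhd G S
  set D := M ∩ nbhd G S
  have hHall := hS.ncard_le_ncard_inter_nbhd (D := D) inter_subset_right
  have hSC : Disjoint S (nbhd G C) := (disjoint_nbhd_comm G).2 disjoint_sdiff_left
  have hND : (S ∩ nbhd G D).ncard ≤ (nbhd G D \ nbhd G C).ncard :=
    ncard_le_ncard fun x hx => ⟨hx.2, hSC.notMem_of_mem_left hx.1⟩
  have hNM : (nbhd G M).ncard = (nbhd G C).ncard + (nbhd G D \ nbhd G C).ncard := by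
    rw [← sdiff_union_inter M (nbhd G S), nbhd_union, ← union_sdiff_self,
      ncard_union_eq disjoint_sdiff_right]
  have hM : D.ncard + C.ncard = M.ncard := ncard_inter_add_ncard_sdiff_eq_ncard M _
  simp only [dG_eq]
  omega

theorem IsCritical.ncard_le_ncard_union_diff_nbhd {S M : Set V} (hS : IsCritical G S)
    (hM : IsIndep G M) : M.ncard ≤ (S ∪ (M \ nbhd G S)).ncard := by
  set C := M \ nbhd G S
  set D := M ∩ nbhd G S
  have hHall := hS.ncard_le_ncard_inter_nbhd (D := D) inter_subset_right
  have hSD : S ∩ nbhd G D ⊆ S \ C := fun x ⟨hxS, u, huD, hux⟩ =>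
    ⟨hxS, fun hxC => hM u huD.1 x hxC.1 hux⟩
  have hMsplit : D.ncard + C.ncard = M.ncard := ncard_inter_add_ncard_sdiff_eq_ncard M _
  have hSC : (S \ C).ncard + C.ncard = (S ∪ C).ncard := ncard_sdiff_add_ncard S C
  have := ncard_le_ncard hSD
  omega

omit [Fintype V] in
theorem IsIndep.union_diff_nbhd {S M : Set V} (hS : IsIndep G S) (hM : IsIndep G M) :
    IsIndep G (S ∪ (M \ nbhd G S)) := by
  rintro u (hu | hu) v (hv | hv) huv
  · exact hS u hu v hv huv
  · exact hv.2 ⟨u, hu, huv⟩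
  · exact hu.2 ⟨v, hv, huv.symm⟩
  · exact hM u hu.1 v hv.1 huv

theorem IsCritIndep.union_diff_nbhd {S M : Set V} (hS : IsCritIndep G S)
    (hM : IsCritIndep G M) : IsCritIndep G (S ∪ (M \ nbhd G S)) := by
  rw [isCritIndep_iff] at hS hM ⊢
  refine ⟨hS.1.union_diff_nbhd hM.1, hS.2.union fun Y => ?_⟩
  exact (hM.2 Y).trans (hS.2.dG_le_dG_diff_nbhd M)

theorem exists_isMaxCritIndep {S : Set V} (hS : IsCritIndep G S) :
    ∃ M, IsMaxCritIndep G M := by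
  obtain ⟨M, hM, hMmax⟩ :=
    (toFinite {T | IsCritIndep G T}).exists_maximalFor ncard _ ⟨S, hS⟩
  exact ⟨M, hM, fun T hT => (le_total T.ncard M.ncard).elim id (hMmax hT)⟩

end

/-- Every critical independent set is contained in some maximum critical independent set. -/
theorem stmt4 (G : SimpleGraph V) (S : Set V) (hS : IsCritIndep G S) :
    ∃ T : Set V, IsMaxCritIndep G T ∧ S ⊆ T := by
  obtain ⟨M, hM, hMmax⟩ := exists_isMaxCritIndep hS
  have hScrit : IsCritical G S := (isCritIndep_iff.1 hS).2
  have hMind : IsIndep G M := (isCritIndep_iff.1 hM).1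
  refine ⟨S ∪ (M \ nbhd G S), ⟨hS.union_diff_nbhd hM, fun T hT => ?_⟩, subset_union_left⟩
  exact (hMmax T hT).trans (hScrit.ncard_le_ncard_union_diff_nbhd hMind)
end

section
/- If G is a finite simple König-Egerváry graph, then |nucleus(G)| + |diadem(G)| = 2α(G). -/
open Set

variable {V : Type*} [Fintype V]

/-!
Fix a maximum matching `M` of the König–Egerváry graph `G`, so that `α = |V ∖ V(M)| + μ`.
An independent set meets each edge of `M` at most once, so a maximum independent set contains
every unmatched vertex and exactly one end of every edge of `M`. The mate map injects `Y ∩ V(M)`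
into `N(Y)`, whence `d(Y) ≤ |V ∖ V(M)| ≤ d(S)` for every `Y` and every maximum independent `S`:
maximum independent sets are critical, so they are exactly the maximum critical independent sets.
Finally the mate map sends `nucleus ∩ V(M)` onto `V(M) ∖ diadem`, and both sets contain
`V ∖ V(M)`, so `|nucleus| + |diadem| = 2 |V ∖ V(M)| + 2μ = 2α`.
-/

namespace SimpleGraph.Subgraph.IsMatching

variable {W : Type*} {G : SimpleGraph W} {M : G.Subgraph}

open Classical in
/-- Unmatched vertices are their own mates. -/
noncomputable def mate (hM : M.IsMatching) (v : W) : W :=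
  if hv : v ∈ M.verts then (hM hv).choose else v

theorem adj_mate (hM : M.IsMatching) {v : W} (hv : v ∈ M.verts) : M.Adj v (hM.mate v) := by
  rw [mate, dif_pos hv]
  exact (hM hv).choose_spec.1

theorem mate_eq_of_adj (hM : M.IsMatching) {v w : W} (h : M.Adj v w) : hM.mate v = w :=
  hM.eq_of_adj_left (hM.adj_mate h.fst_mem) h

theorem mate_mem_verts (hM : M.IsMatching) {v : W} (hv : v ∈ M.verts) : hM.mate v ∈ M.verts :=
  (hM.adj_mate hv).snd_mem

theorem mate_mate (hM : M.IsMatching) {v : W} (hv : v ∈ M.verts) : hM.mate (hM.mate v) = v :=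
  hM.mate_eq_of_adj (hM.adj_mate hv).symm

theorem injOn_mate (hM : M.IsMatching) : InjOn hM.mate M.verts := fun v hv w hw h => by
  rw [← hM.mate_mate hv, h, hM.mate_mate hw]

theorem mate_notMem_of_isIndep (hM : M.IsMatching) {S : Set W} (hS : IsIndep G S) {v : W}
    (hv : v ∈ M.verts) (hvS : v ∈ S) : hM.mate v ∉ S :=
  fun h => hS v hvS _ h (M.adj_sub (hM.adj_mate hv))

theorem ncard_verts [Finite W] (hM : M.IsMatching) : M.verts.ncard = 2 * M.edgeSet.ncard := by
  classical
  have := Fintype.ofFinite W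
  have hdeg : ∀ v : M.verts, M.coe.degree v = 1 := fun v => by
    rw [coe_degree]
    convert (isMatching_iff_forall_degree.mp hM) v v.2
  have hedges : M.edgeSet.ncard = M.coe.edgeFinset.card := by
    rw [← image_coe_edgeSet_coe, (Sym2.map.injective Subtype.val_injective).injOn.ncard_image,
      ← coe_edgeFinset, ncard_coe_finset]
  rw [hedges, ← sum_degrees_eq_twice_card_edges]
  calc M.verts.ncard = ∑ _v : M.verts, 1 := by
        rw [Finset.sum_const, smul_eq_mul, mul_one, Finset.card_univ, ← Nat.card_eq_fintype_card,
          Nat.card_coe_set_eq]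
    _ = _ := Finset.sum_congr rfl fun v _ => by convert (hdeg v).symm

theorem ncard_compl_verts_add [Fintype W] (hM : M.IsMatching) :
    M.vertsᶜ.ncard + 2 * M.edgeSet.ncard = Fintype.card W := by
  rw [← hM.ncard_verts, add_comm, ncard_add_ncard_compl, Nat.card_eq_fintype_card]

theorem ncard_inter_verts_add_ncard_verts_diff [Finite W] (hM : M.IsMatching) (S : Set W) :
    (S ∩ M.verts).ncard + (M.verts \ S).ncard = 2 * M.edgeSet.ncard := by
  rw [inter_comm, ncard_inter_add_ncard_sdiff_eq_ncard, hM.ncard_verts]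

end SimpleGraph.Subgraph.IsMatching

section

variable {G : SimpleGraph V} {M : G.Subgraph} {S : Set V}

theorem bddAbove_ncard_indep (G : SimpleGraph V) :
    BddAbove {n | ∃ S ⊆ (univ : Set V), IsIndep G S ∧ S.ncard = n} :=
  ⟨Fintype.card V, by
    rintro n ⟨S, -, -, rfl⟩
    exact (ncard_le_ncard (subset_univ S)).trans_eq (by simp)⟩

theorem IsIndep.ncard_le_alpha (hS : IsIndep G S) : S.ncard ≤ alpha G :=
  le_csSup (bddAbove_ncard_indep G) ⟨S, subset_univ S, hS, rfl⟩

theorem exists_isIndep_ncard_eq_alpha (G : SimpleGraph V) :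
    ∃ S, IsIndep G S ∧ S.ncard = alpha G := by
  have hne : {n | ∃ S ⊆ (univ : Set V), IsIndep G S ∧ S.ncard = n}.Nonempty :=
    ⟨0, ∅, empty_subset _, fun u hu => hu.elim, ncard_empty V⟩
  obtain ⟨S, -, hS⟩ := Nat.sSup_mem hne (bddAbove_ncard_indep G)
  exact ⟨S, hS⟩

theorem exists_isMaxIndep_s11 (G : SimpleGraph V) : ∃ S, IsMaxIndep G S := by
  obtain ⟨S, hS, hcard⟩ := exists_isIndep_ncard_eq_alpha G
  exact ⟨S, subset_univ S, hS, fun T _ hT => hcard ▸ hT.ncard_le_alpha⟩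

theorem IsMaxIndep.ncard_eq_alpha (hS : IsMaxIndep G S) : S.ncard = alpha G := by
  obtain ⟨T, hT, hcard⟩ := exists_isIndep_ncard_eq_alpha G
  exact le_antisymm hS.2.1.ncard_le_alpha (hcard ▸ hS.2.2 T (subset_univ T) hT)

theorem exists_isMatching_ncard_edgeSet_eq_mu (G : SimpleGraph V) :
    ∃ M : G.Subgraph, M.IsMatching ∧ M.edgeSet.ncard = mu G := by
  have hbdd : BddAbove {n | ∃ M : G.Subgraph, M.IsMatching ∧ M.edgeSet.ncard = n} := by
    refine ⟨Nat.card (Sym2 V), ?_⟩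
    rintro n ⟨M, -, rfl⟩
    exact (ncard_le_ncard (subset_univ M.edgeSet)).trans_eq (ncard_univ _)
  have hne : {n | ∃ M : G.Subgraph, M.IsMatching ∧ M.edgeSet.ncard = n}.Nonempty :=
    ⟨0, ⊥, fun v hv => hv.elim, by simp⟩
  exact Nat.sSup_mem hne hbdd

theorem IsIndep.ncard_inter_verts_le (hS : IsIndep G S) (hM : M.IsMatching) :
    (S ∩ M.verts).ncard ≤ M.edgeSet.ncard := by
  have hmate : (S ∩ M.verts).ncard ≤ (M.verts \ S).ncard :=
    ncard_le_ncard_of_injOn hM.mate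
      (fun v hv => ⟨hM.mate_mem_verts hv.2, hM.mate_notMem_of_isIndep hS hv.2 hv.1⟩)
      (hM.injOn_mate.mono inter_subset_right)
  have := hM.ncard_inter_verts_add_ncard_verts_diff S
  omega

theorem IsIndep.mem_iff_notMem_of_adj (hS : IsIndep G S) (hM : M.IsMatching)
    (hcard : (S ∩ M.verts).ncard = M.edgeSet.ncard) ⦃u v : V⦄ (huv : M.Adj u v) :
    u ∈ S ↔ v ∉ S := by
  have himage : hM.mate '' (S ∩ M.verts) = M.verts \ S := by
    refine eq_of_subset_of_ncard_le ?_ ?_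
    · rintro _ ⟨w, ⟨hwS, hwM⟩, rfl⟩
      exact ⟨hM.mate_mem_verts hwM, hM.mate_notMem_of_isIndep hS hwM hwS⟩
    · have := hM.ncard_inter_verts_add_ncard_verts_diff S
      rw [(hM.injOn_mate.mono inter_subset_right).ncard_image]
      omega
  rw [← hM.mate_eq_of_adj huv]
  refine ⟨hM.mate_notMem_of_isIndep hS huv.fst_mem, fun hv => by_contra fun hu => ?_⟩
  obtain ⟨w, ⟨hwS, hwM⟩, rfl⟩ : u ∈ hM.mate '' (S ∩ M.verts) := himage ▸ ⟨huv.fst_mem, hu⟩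
  exact hv (by rwa [hM.mate_mate hwM])

theorem alpha_eq_ncard_compl_verts_add_mu (hKE : IsKE G) (hM : M.IsMatching)
    (hMcard : M.edgeSet.ncard = mu G) : alpha G = M.vertsᶜ.ncard + mu G := by
  have := hM.ncard_compl_verts_add
  unfold IsKE at hKE
  omega

theorem IsMaxIndep.ncard_inter_verts_eq_and_ncard_diff_verts_eq (hKE : IsKE G)
    (hM : M.IsMatching) (hMcard : M.edgeSet.ncard = mu G) (hS : IsMaxIndep G S) :
    (S ∩ M.verts).ncard = M.edgeSet.ncard ∧ (S \ M.verts).ncard = M.vertsᶜ.ncard := by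
  have hinter := hS.2.1.ncard_inter_verts_le hM
  have hdiff : (S \ M.verts).ncard ≤ M.vertsᶜ.ncard := ncard_le_ncard fun v hv => hv.2
  have hsplit := ncard_inter_add_ncard_sdiff_eq_ncard S M.verts
  have := hS.ncard_eq_alpha
  have := alpha_eq_ncard_compl_verts_add_mu hKE hM hMcard
  omega

theorem IsMaxIndep.compl_verts_subset (hKE : IsKE G) (hM : M.IsMatching)
    (hMcard : M.edgeSet.ncard = mu G) (hS : IsMaxIndep G S) : M.vertsᶜ ⊆ S := by
  have h : S \ M.verts = M.vertsᶜ := eq_of_subset_of_ncard_le (fun v hv => hv.2)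
    (hS.ncard_inter_verts_eq_and_ncard_diff_verts_eq hKE hM hMcard).2.ge
  exact fun v hv => (h.symm ▸ hv : v ∈ S \ M.verts).1

theorem IsMaxIndep.mem_iff_notMem_of_adj (hKE : IsKE G) (hM : M.IsMatching)
    (hMcard : M.edgeSet.ncard = mu G) (hS : IsMaxIndep G S) ⦃u v : V⦄ (huv : M.Adj u v) :
    u ∈ S ↔ v ∉ S :=
  hS.2.1.mem_iff_notMem_of_adj hM
    (hS.ncard_inter_verts_eq_and_ncard_diff_verts_eq hKE hM hMcard).1 huv

theorem dG_le_ncard_compl_verts (hM : M.IsMatching) (Y : Set V) : dG G Y ≤ M.vertsᶜ.ncard := by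
  have hnbhd : (Y ∩ M.verts).ncard ≤ (nbhd G Y).ncard :=
    ncard_le_ncard_of_injOn hM.mate (fun v hv => ⟨v, hv.1, M.adj_sub (hM.adj_mate hv.2)⟩)
      (hM.injOn_mate.mono inter_subset_right)
  have hsplit := ncard_inter_add_ncard_sdiff_eq_ncard Y M.verts
  have hdiff : (Y \ M.verts).ncard ≤ M.vertsᶜ.ncard := ncard_le_ncard fun v hv => hv.2
  rw [dG, dOn, inter_univ]
  omega

theorem IsMaxIndep.isCritIndep (hKE : IsKE G) (hS : IsMaxIndep G S) : IsCritIndep G S := by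
  obtain ⟨M, hM, hMcard⟩ := exists_isMatching_ncard_edgeSet_eq_mu G
  refine ⟨subset_univ S, hS.2.1, fun Y _ => (dG_le_ncard_compl_verts hM Y).trans ?_⟩
  have hnbhd : (nbhd G S).ncard ≤ Sᶜ.ncard :=
    ncard_le_ncard fun w ⟨u, hu, huw⟩ hw => hS.2.1 u hu w hw huw
  have hcompl := ncard_add_ncard_compl S
  have := hS.ncard_eq_alpha
  have := alpha_eq_ncard_compl_verts_add_mu hKE hM hMcard
  have := hM.ncard_compl_verts_add
  rw [Nat.card_eq_fintype_card] at hcompl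
  rw [dOn, inter_univ]
  omega

theorem isMaxCritIndep_iff_isMaxIndep (hKE : IsKE G) : IsMaxCritIndep G S ↔ IsMaxIndep G S := by
  obtain ⟨T, hT⟩ := exists_isMaxIndep_s11 G
  constructor
  · rintro ⟨hcrit, hmax⟩
    refine ⟨subset_univ S, hcrit.2.1, fun U _ hU => hU.ncard_le_alpha.trans ?_⟩
    exact hT.ncard_eq_alpha ▸ hmax T (hT.isCritIndep hKE)
  · intro hS
    exact ⟨hS.isCritIndep hKE, fun U hU => hS.ncard_eq_alpha ▸ hU.2.1.ncard_le_alpha⟩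

theorem ncard_sInter_add_ncard_sUnion (hM : M.IsMatching) {F : Set (Set V)} (hF : F.Nonempty)
    (hcompl : ∀ S ∈ F, M.vertsᶜ ⊆ S) (hsplit : ∀ S ∈ F, ∀ ⦃u v⦄, M.Adj u v → (u ∈ S ↔ v ∉ S)) :
    (⋂₀ F).ncard + (⋃₀ F).ncard = 2 * M.vertsᶜ.ncard + M.verts.ncard := by
  obtain ⟨S₀, hS₀⟩ := hF
  have hinter : ⋂₀ F \ M.verts = M.vertsᶜ := subset_antisymm (fun v hv => hv.2)
    fun v hv => ⟨mem_sInter.2 fun S hS => hcompl S hS hv, hv⟩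
  have hunion : ⋃₀ F \ M.verts = M.vertsᶜ := subset_antisymm (fun v hv => hv.2)
    fun v hv => ⟨⟨S₀, hS₀, hcompl S₀ hS₀ hv⟩, hv⟩
  have himage : hM.mate '' (⋂₀ F ∩ M.verts) = M.verts \ ⋃₀ F := by
    ext w
    constructor
    · rintro ⟨v, ⟨hvC, hvM⟩, rfl⟩
      refine ⟨hM.mate_mem_verts hvM, fun ⟨S, hS, hwS⟩ => ?_⟩
      exact (hsplit S hS (hM.adj_mate hvM)).1 (hvC S hS) hwS
    · rintro ⟨hwM, hwD⟩
      refine ⟨hM.mate w, ⟨mem_sInter.2 fun S hS => ?_, hM.mate_mem_verts hwM⟩, hM.mate_mate hwM⟩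
      exact (hsplit S hS (hM.adj_mate hwM).symm).2 fun hw => hwD ⟨S, hS, hw⟩
  have hsplitInter : (⋂₀ F ∩ M.verts).ncard + M.vertsᶜ.ncard = (⋂₀ F).ncard :=
    hinter ▸ ncard_inter_add_ncard_sdiff_eq_ncard _ _
  have hsplitUnion : (⋃₀ F ∩ M.verts).ncard + M.vertsᶜ.ncard = (⋃₀ F).ncard :=
    hunion ▸ ncard_inter_add_ncard_sdiff_eq_ncard _ _
  have hsplitVerts : (⋃₀ F ∩ M.verts).ncard + (M.verts \ ⋃₀ F).ncard = M.verts.ncard :=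
    inter_comm M.verts _ ▸ ncard_inter_add_ncard_sdiff_eq_ncard _ _
  have hmate : (M.verts \ ⋃₀ F).ncard = (⋂₀ F ∩ M.verts).ncard :=
    himage ▸ (hM.injOn_mate.mono inter_subset_right).ncard_image
  omega

end

/-- If `G` is König-Egerváry, then `|nucleus(G)| + |diadem(G)| = 2α(G)`. -/
theorem stmt11 (G : SimpleGraph V) (hKE : IsKE G) :
    (nucleus G).ncard + (diadem G).ncard = 2 * alpha G := by
  obtain ⟨M, hM, hMcard⟩ := exists_isMatching_ncard_edgeSet_eq_mu G
  have hfamily : {S | IsMaxCritIndepOn G univ S} = {S | IsMaxIndep G S} :=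
    ext fun S => isMaxCritIndep_iff_isMaxIndep hKE
  rw [nucleus, nucleusOn, diadem, diademOn, hfamily,
    ncard_sInter_add_ncard_sUnion (F := {S | IsMaxIndep G S}) hM (exists_isMaxIndep_s11 G)
      (fun _ hS => IsMaxIndep.compl_verts_subset hKE hM hMcard hS)
      (fun _ hS => IsMaxIndep.mem_iff_notMem_of_adj hKE hM hMcard hS),
    hM.ncard_verts, alpha_eq_ncard_compl_verts_add_mu hKE hM hMcard, hMcard]
  ring
end
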